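/- arXiv:2307.06324 — 4 statements merged into one kernel-verified Lean document; each statement's English description precedes it below -/
import Mathlib

section
/- Let t ≥ 1, let h = (h_0,…,h_{t−1}) ∈ ℝ^t be ε-straightforward with parameter Δ ∈ (0,1/2] for some ε ≥ 0, and set H := Σ_{i=0}^{t−1}(h_i − ε); assume 0 < H·Δ < 1. Let f : ℝ^n → ℝ be convex and L-smooth with a minimizer x_⋆, let x_0 ∈ ℝ^n, assume D := sup{‖x − x_⋆‖₂ : f(x) ≤ f(x_0)} is finite, and run gradient descent with pattern h from x_0. Define s̄ := ⌈ log((f(x_0) − f(x_⋆))/(LD²Δ)) / log(1/(1 − HΔ)) ⌉ if f(x_0) − f(x_⋆) > LD²Δ and s̄ := 0 otherwise. Then for every s ∈ ℕ, writing T = s·t: if s ≤ s̄ then f(x_T) − f(x_⋆) ≤ (1 − HΔ)^s · (f(x_0) − f(x_⋆)), and if s > s̄ then f(x_T) − f(x_⋆) ≤ LD² / (H·(s − s̄) + 1/Δ) = LD² / ((avg(h) − ε)·(T − s̄·t) + 1/Δ), where avg(h) := (Σ_{i=0}^{t−1} h_i)/t. -/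
open scoped BigOperators


noncomputable section

/-- `ℝ^n` with the Euclidean norm. -/
abbrev E (n : ℕ) : Type := EuclideanSpace ℝ (Fin n)

/-- A differentiable `f : ℝ^n → ℝ` is `L`-smooth if its gradient is `L`-Lipschitz. -/
def IsLSmooth {n : ℕ} (L : ℝ) (f : E n → ℝ) : Prop :=
  Differentiable ℝ f ∧ ∀ x y : E n, ‖gradient f x - gradient f y‖ ≤ L * ‖x - y‖

/-- A stepsize pattern `h` (of length `t`, given as the first `t` values of `h : ℕ → ℝ`)
is `ε`-straightforward with parameter `Δ`: for every dimension `n`, every `L, D > 0`,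
every `δ ∈ [0, L·D²·Δ]`, every convex `L`-smooth `g` with minimizer `ystar`, and every
initialization `y 0` with `‖y 0 - ystar‖ ≤ D` and `g (y 0) - g ystar ≤ δ`, one pass of
gradient descent through the pattern satisfies
`g (y t) - g ystar ≤ δ - (Σ_{i<t}(h i - ε)/(L·D²))·δ²`. -/
def IsStraightforward (t : ℕ) (h : ℕ → ℝ) (ε Δ : ℝ) : Prop :=
  ∀ (n : ℕ) (L D δ : ℝ), 0 < L → 0 < D → 0 ≤ δ → δ ≤ L * D ^ 2 * Δ →
    ∀ g : E n → ℝ, ConvexOn ℝ Set.univ g → IsLSmooth L g →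
      ∀ ystar : E n, (∀ z, g ystar ≤ g z) →
        ∀ y : ℕ → E n, ‖y 0 - ystar‖ ≤ D → g (y 0) - g ystar ≤ δ →
          (∀ k < t, y (k + 1) = y k - (h k / L) • gradient g (y k)) →
          g (y t) - g ystar ≤ δ - ((∑ i ∈ Finset.range t, (h i - ε)) / (L * D ^ 2)) * δ ^ 2

/-! Write `g s = f (x (s * t)) - f xstar`. The points `x (s * t)` never leave the initial
sublevel set, so each pass through the pattern is an instance of the straightforward inequality
for every radius `D' ≥ ‖x (s * t) - xstar‖`. While `g s > L D² Δ`, the radius with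
`L D'² Δ = g s` turns the quadratic decrease into the contraction `g (s + 1) ≤ (1 - H Δ) g s`,
and `s̄` contractions bring the gap below `L D² Δ`. From then on the radius `D` gives
`g ↦ g - (H / (L D²)) g²`, under which `L D² / g` grows by at least `H` per pass. -/

/-- `ρ` plays the role of `L D'²` in `IsStraightforward` and `e s` that of
`L ‖x (s * t) - xstar‖²`. -/
def OnePassDescent (Δ H : ℝ) (e g : ℕ → ℝ) : Prop :=
  ∀ s ρ δ, 0 < ρ → e s ≤ ρ → 0 ≤ δ → δ ≤ ρ * Δ → g s ≤ δ → g (s + 1) ≤ δ - H / ρ * δ ^ 2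

theorem IsStraightforward.onePassDescent {n t : ℕ} {h : ℕ → ℝ} {ε Δ L : ℝ}
    (hsf : IsStraightforward t h ε Δ) (hL : 0 < L) {f : E n → ℝ}
    (hconv : ConvexOn ℝ Set.univ f) (hsmooth : IsLSmooth L f) {xstar : E n}
    (hmin : ∀ z, f xstar ≤ f z) {x : ℕ → E n}
    (hrec : ∀ k, x (k + 1) = x k - (h (k % t) / L) • gradient f (x k)) :
    OnePassDescent Δ (∑ i ∈ Finset.range t, (h i - ε))
      (fun s ↦ L * ‖x (s * t) - xstar‖ ^ 2) (fun s ↦ f (x (s * t)) - f xstar) := by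
  intro s ρ δ hρ hdist hδ hδρ hgap
  set D := Real.sqrt (ρ / L)
  have hLD : L * D ^ 2 = ρ := by
    rw [Real.sq_sqrt (div_pos hρ hL).le]
    field_simp
  have hdistD : ‖x (s * t) - xstar‖ ≤ D :=
    Real.le_sqrt_of_sq_le ((le_div_iff₀ hL).2 (by linarith))
  have hstep : ∀ k < t, x (s * t + (k + 1)) =
      x (s * t + k) - (h k / L) • gradient f (x (s * t + k)) := fun k hk ↦ by
    rw [← add_assoc, hrec, mul_comm, Nat.mul_add_mod, Nat.mod_eq_of_lt hk]
  have := hsf n L D δ hL (Real.sqrt_pos.2 (div_pos hρ hL)) hδ (hLD ▸ hδρ) f hconv hsmooth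
    xstar hmin (fun k ↦ x (s * t + k)) hdistD hgap hstep
  rw [hLD] at this
  simpa only [add_mul, one_mul, div_mul_eq_mul_div] using this

namespace OnePassDescent

variable {Δ H : ℝ} {e g : ℕ → ℝ}

theorem antitone (hP : OnePassDescent Δ H e g) (hΔ : 0 < Δ) (hH : 0 ≤ H)
    (he : ∀ s, 0 ≤ e s) (hg : ∀ s, 0 ≤ g s) : Antitone g := by
  refine antitone_nat_of_succ_le fun s ↦ ?_
  have hρ : 0 < e s + g s / Δ + 1 := by have := he s; have := hg s; positivity
  have := hP s _ (g s) hρ (by linarith [div_nonneg (hg s) hΔ.le]) (hg s)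
    (by rw [← div_le_iff₀ hΔ]; linarith [he s]) le_rfl
  have : 0 ≤ H / (e s + g s / Δ + 1) * g s ^ 2 := by positivity
  linarith

theorem succ_le_mul (hP : OnePassDescent Δ H e g) (hΔ : 0 < Δ) (hH : 0 ≤ H)
    (he : ∀ s, 0 ≤ e s) (hg : ∀ s, 0 ≤ g s) {s : ℕ} {δ : ℝ}
    (hes : e s ≤ δ / Δ) (hgs : g s ≤ δ) : g (s + 1) ≤ (1 - H * Δ) * δ := by
  -- `ρ = δ / Δ` saturates `δ ≤ ρ Δ`, so the decrease `H δ² / ρ` is `H Δ δ`.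
  rcases (hg s).trans hgs |>.eq_or_lt with rfl | hδ
  · simpa using (hP.antitone hΔ hH he hg (Nat.le_succ s)).trans hgs
  · calc g (s + 1) ≤ δ - H / (δ / Δ) * δ ^ 2 :=
          hP s _ δ (div_pos hδ hΔ) hes hδ.le (div_mul_cancel₀ δ hΔ.ne').ge hgs
      _ = (1 - H * Δ) * δ := by field_simp

theorem succ_le_div (hP : OnePassDescent Δ H e g) (hΔ : 0 < Δ) (hH : 0 ≤ H)
    (he : ∀ s, 0 ≤ e s) (hg : ∀ s, 0 ≤ g s) {s : ℕ} {R a : ℝ} (hR : 0 ≤ R)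
    (hes : e s ≤ R) (ha : 1 / Δ ≤ a) (hgs : g s ≤ R / a) : g (s + 1) ≤ R / (a + H) := by
  have ha0 : 0 < a := lt_of_lt_of_le (by positivity) ha
  rcases hR.eq_or_lt with rfl | hR
  · simpa using (hP.antitone hΔ hH he hg (Nat.le_succ s)).trans hgs
  · have hRa : R / a ≤ R * Δ := by
      rw [div_le_iff₀ ha0, mul_assoc]
      exact le_mul_of_one_le_right hR.le (by rwa [one_div, inv_le_iff_one_le_mul₀' hΔ] at ha)
    calc g (s + 1) ≤ R / a - H / R * (R / a) ^ 2 :=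
          hP s R (R / a) hR hes (by positivity) hRa hgs
      _ = R * (a - H) / a ^ 2 := by field_simp
      _ ≤ R / (a + H) := by
          rw [div_le_div_iff₀ (by positivity) (by positivity)]
          nlinarith [mul_nonneg hR.le (sq_nonneg H)]

theorem le_pow_mul (hP : OnePassDescent Δ H e g) (hΔ : 0 < Δ) (hH : 0 ≤ H)
    (he : ∀ s, 0 ≤ e s) (hg : ∀ s, 0 ≤ g s) {R : ℝ} (hR : ∀ s, e s ≤ R) {N : ℕ}
    (hN : ∀ s < N, R * Δ ≤ (1 - H * Δ) ^ s * g 0) :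
    ∀ s ≤ N, g s ≤ (1 - H * Δ) ^ s * g 0 := by
  intro s hs
  induction s with
  | zero => simp
  | succ s ih =>
    have hes : e s ≤ (1 - H * Δ) ^ s * g 0 / Δ :=
      (le_div_iff₀ hΔ).2 ((mul_le_mul_of_nonneg_right (hR s) hΔ.le).trans (hN s hs))
    calc g (s + 1) ≤ (1 - H * Δ) * ((1 - H * Δ) ^ s * g 0) :=
          hP.succ_le_mul hΔ hH he hg hes (ih (Nat.le_of_succ_le hs))
      _ = (1 - H * Δ) ^ (s + 1) * g 0 := by ring

theorem le_div (hP : OnePassDescent Δ H e g) (hΔ : 0 < Δ) (hH : 0 ≤ H)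
    (he : ∀ s, 0 ≤ e s) (hg : ∀ s, 0 ≤ g s) {R : ℝ} (hR0 : 0 ≤ R) (hR : ∀ s, e s ≤ R)
    {N : ℕ} (hN : g N ≤ R * Δ) : ∀ s, N ≤ s → g s ≤ R / (H * ((s : ℝ) - N) + 1 / Δ) := by
  suffices ∀ k : ℕ, g (N + k) ≤ R / (H * k + 1 / Δ) by
    intro s hs
    obtain ⟨k, rfl⟩ := Nat.exists_eq_add_of_le hs
    simpa using this k
  intro k
  induction k with
  | zero => simpa [div_div_eq_mul_div] using hN
  | succ k ih =>
    have ha : 1 / Δ ≤ H * k + 1 / Δ := le_add_of_nonneg_left (by positivity)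
    calc g (N + k + 1) ≤ R / (H * k + 1 / Δ + H) :=
          hP.succ_le_div hΔ hH he hg hR0 (hR _) ha ih
      _ = R / (H * ↑(k + 1) + 1 / Δ) := by push_cast; ring_nf

end OnePassDescent

theorem pow_mul_le_iff_log_div_log_le {q c g₀ : ℝ} (hq0 : 0 < q) (hq1 : q < 1) (hc : 0 < c)
    (hg₀ : 0 < g₀) (s : ℕ) :
    q ^ s * g₀ ≤ c ↔ Real.log (g₀ / c) / Real.log (1 / q) ≤ s := by
  have hlog : 0 < Real.log (1 / q) := Real.log_pos (one_lt_one_div hq0 hq1)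
  rw [div_le_iff₀ hlog, Real.log_div hg₀.ne' hc.ne', one_div, Real.log_inv,
    ← Real.log_le_log_iff (by positivity) hc, Real.log_mul (by positivity) hg₀.ne',
    Real.log_pow]
  constructor <;> intro <;> linarith

def linearPhaseLength (q c g₀ : ℝ) : ℕ :=
  if c < g₀ then ⌈Real.log (g₀ / c) / Real.log (1 / q)⌉₊ else 0

theorem le_pow_mul_of_lt_linearPhaseLength {q c g₀ : ℝ} (hq0 : 0 < q) (hq1 : q < 1)
    (hc : 0 ≤ c) {s : ℕ} (hs : s < linearPhaseLength q c g₀) : c ≤ q ^ s * g₀ := by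
  unfold linearPhaseLength at hs
  split_ifs at hs with hcg
  · rcases hc.eq_or_lt with rfl | hc
    · positivity
    · exact le_of_not_ge fun h ↦ (Nat.lt_ceil.1 hs).not_ge <|
        (pow_mul_le_iff_log_div_log_le hq0 hq1 hc (hc.trans hcg) s).1 h
  · exact absurd hs (Nat.not_lt_zero s)

theorem pow_linearPhaseLength_mul_le {q c g₀ : ℝ} (hq0 : 0 < q) (hq1 : q < 1)
    (hc : 0 < c ∨ g₀ ≤ c) : q ^ linearPhaseLength q c g₀ * g₀ ≤ c := by
  unfold linearPhaseLength
  split_ifs with hcg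
  · have hc : 0 < c := hc.resolve_right hcg.not_ge
    exact (pow_mul_le_iff_log_div_log_le hq0 hq1 hc (hc.trans hcg) _).2 (Nat.le_ceil _)
  · simpa using not_lt.1 hcg

theorem straightforward_rate_general {n : ℕ} (t : ℕ) (h : ℕ → ℝ)
    (ε Δ : ℝ) (hΔ : 0 < Δ)
    (hsf : IsStraightforward t h ε Δ)
    (H : ℝ) (hH : H = ∑ i ∈ Finset.range t, (h i - ε))
    (hHΔpos : 0 < H * Δ) (hHΔlt : H * Δ < 1)
    (L : ℝ) (hL : 0 < L)
    (f : E n → ℝ) (hconv : ConvexOn ℝ Set.univ f) (hsmooth : IsLSmooth L f)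
    (xstar : E n) (hmin : ∀ z, f xstar ≤ f z)
    (x : ℕ → E n) (x0 : E n) (hx0 : x 0 = x0)
    (D : ℝ) (hD : IsLUB {r : ℝ | ∃ z : E n, f z ≤ f x0 ∧ r = ‖z - xstar‖} D)
    (hrec : ∀ k : ℕ, x (k + 1) = x k - (h (k % t) / L) • gradient f (x k))
    (sbar : ℕ)
    (hsbar : sbar =
      if L * D ^ 2 * Δ < f x0 - f xstar then
        ⌈Real.log ((f x0 - f xstar) / (L * D ^ 2 * Δ)) / Real.log (1 / (1 - H * Δ))⌉₊
      else 0) :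
    ∀ s : ℕ,
      (s ≤ sbar →
        f (x (s * t)) - f xstar ≤ (1 - H * Δ) ^ s * (f x0 - f xstar)) ∧
      (sbar < s →
        f (x (s * t)) - f xstar ≤ L * D ^ 2 / (H * ((s : ℝ) - (sbar : ℝ)) + 1 / Δ)) := by
  have hH0 : 0 ≤ H := (pos_of_mul_pos_left hHΔpos hΔ.le).le
  have hq0 : 0 < 1 - H * Δ := sub_pos.2 hHΔlt
  have hq1 : 1 - H * Δ < 1 := sub_lt_self 1 hHΔpos
  have hP := hH ▸ hsf.onePassDescent hL hconv hsmooth hmin hrec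
  have he (s : ℕ) : 0 ≤ L * ‖x (s * t) - xstar‖ ^ 2 := by positivity
  have hg (s : ℕ) : 0 ≤ f (x (s * t)) - f xstar := sub_nonneg.2 (hmin _)
  have hx0' : x (0 * t) = x0 := by rw [zero_mul, hx0]
  have hdist (s : ℕ) : ‖x (s * t) - xstar‖ ≤ D := by
    refine hD.1 ⟨x (s * t), ?_, rfl⟩
    have := hP.antitone hΔ hH0 he hg (Nat.zero_le s)
    simp only [hx0'] at this
    linarith
  have hR (s : ℕ) : L * ‖x (s * t) - xstar‖ ^ 2 ≤ L * D ^ 2 := by gcongr; exact hdist s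
  have hsbar' : sbar = linearPhaseLength (1 - H * Δ) (L * D ^ 2 * Δ) (f x0 - f xstar) := hsbar
  have hthreshold : 0 < L * D ^ 2 * Δ ∨ f x0 - f xstar ≤ L * D ^ 2 * Δ := by
    rcases (norm_nonneg _ |>.trans (hdist 0)).eq_or_lt with rfl | hD0
    · have : x0 = xstar := by simpa [hx0, sub_eq_zero] using hdist 0
      simp [this]
    · exact Or.inl (by positivity)
  have hlinear := hP.le_pow_mul hΔ hH0 he hg hR (N := sbar) fun s hs ↦ by
    rw [hx0']
    exact le_pow_mul_of_lt_linearPhaseLength hq0 hq1 (by positivity) (hsbar' ▸ hs)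
  simp only [hx0'] at hlinear
  have hsublinear := hP.le_div hΔ hH0 he hg (by positivity) hR (N := sbar) <|
    (hlinear sbar le_rfl).trans (hsbar' ▸ pow_linearPhaseLength_mul_le hq0 hq1 hthreshold)
  exact fun s ↦ ⟨hlinear s, fun hs ↦ hsublinear s hs.le⟩

/-- Theorem 3.1 (main convergence rate for straightforward stepsize patterns):
initial linear convergence for `s ≤ s̄`, then the sublinear rate
`f (x (s t)) - f xstar ≤ L D² / (H (s - s̄) + 1/Δ)`
(equivalently `L D² / ((avg h - ε)(T - s̄ t) + 1/Δ)` with `T = s t`). -/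
theorem straightforward_rate {n : ℕ} (t : ℕ) (ht : 1 ≤ t) (h : ℕ → ℝ)
    (ε Δ : ℝ) (hε : 0 ≤ ε) (hΔ : 0 < Δ) (hΔhalf : Δ ≤ 1 / 2)
    (hsf : IsStraightforward t h ε Δ)
    (H : ℝ) (hH : H = ∑ i ∈ Finset.range t, (h i - ε))
    (hHΔpos : 0 < H * Δ) (hHΔlt : H * Δ < 1)
    (L : ℝ) (hL : 0 < L)
    (f : E n → ℝ) (hconv : ConvexOn ℝ Set.univ f) (hsmooth : IsLSmooth L f)
    (xstar : E n) (hmin : ∀ z, f xstar ≤ f z)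
    (x : ℕ → E n) (x0 : E n) (hx0 : x 0 = x0)
    (D : ℝ) (hD : IsLUB {r : ℝ | ∃ z : E n, f z ≤ f x0 ∧ r = ‖z - xstar‖} D)
    (hrec : ∀ k : ℕ, x (k + 1) = x k - (h (k % t) / L) • gradient f (x k))
    (sbar : ℕ)
    (hsbar : sbar =
      if L * D ^ 2 * Δ < f x0 - f xstar then
        ⌈Real.log ((f x0 - f xstar) / (L * D ^ 2 * Δ)) / Real.log (1 / (1 - H * Δ))⌉₊
      else 0) :
    ∀ s : ℕ,
      (s ≤ sbar →
        f (x (s * t)) - f xstar ≤ (1 - H * Δ) ^ s * (f x0 - f xstar)) ∧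
      (sbar < s →
        f (x (s * t)) - f xstar ≤ L * D ^ 2 / (H * ((s : ℝ) - (sbar : ℝ)) + 1 / Δ)) :=
  straightforward_rate_general t h ε Δ hΔ hsf H hH hHΔpos hHΔlt L hL f hconv hsmooth xstar hmin x x0
    hx0 D hD hrec sbar hsbar

end
end

section
/- Let t ≥ 1 and let h = (h_0,…,h_{t−1}) ∈ ℝ^t be ε-straightforward with parameter Δ ∈ (0,1/2] for some ε ≥ 0, and set H := Σ_{i=0}^{t−1}(h_i − ε). Let f : ℝ^n → ℝ be convex and L-smooth with a minimizer x_⋆, let x_0 ∈ ℝ^n, assume D := sup{‖x − x_⋆‖₂ : f(x) ≤ f(x_0)} is finite, run gradient descent with pattern h from x_0, and write δ_k := f(x_k) − f(x_⋆). Then for every s ∈ ℕ: if δ_{st} ≤ LD²Δ then δ_{(s+1)t} ≤ δ_{st} − (H/(LD²))·δ_{st}², and if δ_{st} > LD²Δ then δ_{(s+1)t} ≤ (1 − H·Δ)·δ_{st}. -/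
open scoped BigOperators

noncomputable section

/-!
Each block of `t` consecutive iterates is one pass of gradient descent through the pattern,
started at `x (s * t)`, so the straightforward inequality applies to it with any radius
`D' ≥ ‖x (s * t) - xstar‖` for which `δ ≤ L D'² Δ`. Letting `D' → ∞` shows that a pass never
increases `f`; hence every `x (s * t)` lies in the sublevel set of `x0` and the radius `D`
is admissible. When `δ ≤ L D² Δ` this gives the first bound; otherwise the radius `D'` with
`L D'² Δ = δ` exceeds `D` and turns the straightforward inequality into `(1 - H Δ) δ`.
-/

open Filter Topology

namespace IsStraightforward

variable {t : ℕ} {h : ℕ → ℝ} {ε Δ : ℝ} {n : ℕ} {L : ℝ} {g : E n → ℝ} {ystar : E n}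
  {y : ℕ → E n}

variable (hsf : IsStraightforward t h ε Δ) (hL : 0 < L) (hconv : ConvexOn ℝ Set.univ g)
  (hsmooth : IsLSmooth L g) (hmin : ∀ z, g ystar ≤ g z)
  (hy : ∀ k < t, y (k + 1) = y k - (h k / L) • gradient g (y k))
include hsf hL hconv hsmooth hmin hy

theorem pass_gap_le {D : ℝ} (hD : 0 < D) (hdist : ‖y 0 - ystar‖ ≤ D)
    (hgap : g (y 0) - g ystar ≤ L * D ^ 2 * Δ) :
    g (y t) - g ystar ≤ (g (y 0) - g ystar) -
      ((∑ i ∈ Finset.range t, (h i - ε)) / (L * D ^ 2)) * (g (y 0) - g ystar) ^ 2 :=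
  hsf n L D _ hL hD (sub_nonneg.2 (hmin _)) hgap g hconv hsmooth ystar hmin y hdist le_rfl hy

theorem pass_le (hΔ : 0 < Δ) : g (y t) ≤ g (y 0) := by
  set δ := g (y 0) - g ystar
  set H := ∑ i ∈ Finset.range t, (h i - ε)
  have hradius : Tendsto (fun D : ℝ => L * D ^ 2) atTop atTop :=
    (tendsto_pow_atTop two_ne_zero).const_mul_atTop hL
  have hlim : Tendsto (fun D : ℝ => δ - H / (L * D ^ 2) * δ ^ 2) atTop (𝓝 δ) := by
    simpa using tendsto_const_nhds.sub
      ((tendsto_const_nhds (x := H)).div_atTop hradius |>.mul_const (δ ^ 2))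
  have hbound : ∀ᶠ D in atTop, g (y t) - g ystar ≤ δ - H / (L * D ^ 2) * δ ^ 2 := by
    filter_upwards [eventually_gt_atTop 0, eventually_ge_atTop ‖y 0 - ystar‖,
      (hradius.atTop_mul_const hΔ).eventually_ge_atTop δ] with D hD hdist hgap
    exact hsf.pass_gap_le hL hconv hsmooth hmin hy hD hdist hgap
  linarith [ge_of_tendsto hlim hbound]

theorem pass_gap_le_of_le {D : ℝ} (hΔ : 0 < Δ) (hD : 0 ≤ D) (hdist : ‖y 0 - ystar‖ ≤ D)
    (hgap : g (y 0) - g ystar ≤ L * D ^ 2 * Δ) :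
    g (y t) - g ystar ≤ (g (y 0) - g ystar) -
      ((∑ i ∈ Finset.range t, (h i - ε)) / (L * D ^ 2)) * (g (y 0) - g ystar) ^ 2 := by
  rcases hD.eq_or_lt with rfl | hD
  · -- at `D = 0` the coefficient `H / (L * 0 ^ 2)` is the junk value `0`
    simpa using hsf.pass_le hL hconv hsmooth hmin hy hΔ
  · exact hsf.pass_gap_le hL hconv hsmooth hmin hy hD hdist hgap

theorem pass_gap_le_of_lt {D : ℝ} (hΔ : 0 < Δ) (hD : 0 ≤ D) (hdist : ‖y 0 - ystar‖ ≤ D)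
    (hgap : L * D ^ 2 * Δ < g (y 0) - g ystar) :
    g (y t) - g ystar ≤ (1 - (∑ i ∈ Finset.range t, (h i - ε)) * Δ) * (g (y 0) - g ystar) := by
  set δ := g (y 0) - g ystar
  have hδ : 0 < δ := lt_of_le_of_lt (by positivity) hgap
  set D' := Real.sqrt (δ / (L * Δ))
  have hLD' : L * D' ^ 2 = δ / Δ := by
    rw [Real.sq_sqrt (by positivity)]
    field_simp
  have hDD' : D ≤ D' := by
    rw [Real.le_sqrt hD (by positivity), le_div_iff₀ (by positivity)]
    linarith
  have hpass := hsf.pass_gap_le hL hconv hsmooth hmin hy (Real.sqrt_pos.2 (by positivity))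
    (hdist.trans hDD') (by rw [hLD', div_mul_cancel₀ _ hΔ.ne'])
  refine hpass.trans_eq ?_
  rw [hLD']
  field_simp
  ring

end IsStraightforward

theorem cyclic_step_shift {n t : ℕ} {h : ℕ → ℝ} {L : ℝ} {f : E n → ℝ} {x : ℕ → E n}
    (hrec : ∀ k : ℕ, x (k + 1) = x k - (h (k % t) / L) • gradient f (x k)) (s : ℕ) :
    ∀ k < t, x (s * t + (k + 1)) = x (s * t + k) - (h k / L) • gradient f (x (s * t + k)) := by
  intro k hk
  rw [← Nat.add_assoc, hrec, Nat.mul_comm, Nat.mul_add_mod, Nat.mod_eq_of_lt hk]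

theorem straightforward_cycle_recurrence_general {n : ℕ} (t : ℕ) (h : ℕ → ℝ)
    (ε Δ : ℝ) (hΔ : 0 < Δ)
    (hsf : IsStraightforward t h ε Δ)
    (H : ℝ) (hH : H = ∑ i ∈ Finset.range t, (h i - ε))
    (L : ℝ) (hL : 0 < L)
    (f : E n → ℝ) (hconv : ConvexOn ℝ Set.univ f) (hsmooth : IsLSmooth L f)
    (xstar : E n) (hmin : ∀ z, f xstar ≤ f z)
    (x : ℕ → E n) (x0 : E n) (hx0 : x 0 = x0)
    (D : ℝ) (hD : IsLUB {r : ℝ | ∃ z : E n, f z ≤ f x0 ∧ r = ‖z - xstar‖} D)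
    (hrec : ∀ k : ℕ, x (k + 1) = x k - (h (k % t) / L) • gradient f (x k)) :
    ∀ s : ℕ,
      (f (x (s * t)) - f xstar ≤ L * D ^ 2 * Δ →
        f (x ((s + 1) * t)) - f xstar ≤
          (f (x (s * t)) - f xstar) - (H / (L * D ^ 2)) * (f (x (s * t)) - f xstar) ^ 2) ∧
      (L * D ^ 2 * Δ < f (x (s * t)) - f xstar →
        f (x ((s + 1) * t)) - f xstar ≤ (1 - H * Δ) * (f (x (s * t)) - f xstar)) := by
  have hblock (s : ℕ) : (s + 1) * t = s * t + t := Nat.succ_mul s t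
  have hsublevel (s : ℕ) : f (x (s * t)) ≤ f x0 := by
    induction s with
    | zero => simp [hx0]
    | succ s ih =>
      rw [hblock]
      exact (hsf.pass_le (y := fun k => x (s * t + k)) hL hconv hsmooth hmin
        (cyclic_step_shift hrec s) hΔ).trans ih
  intro s
  have hdist : ‖x (s * t) - xstar‖ ≤ D := hD.1 ⟨_, hsublevel s, rfl⟩
  have hD0 : 0 ≤ D := (norm_nonneg _).trans hdist
  rw [hblock, hH]
  exact ⟨hsf.pass_gap_le_of_le (y := fun k => x (s * t + k)) hL hconv hsmooth hmin
      (cyclic_step_shift hrec s) hΔ hD0 hdist,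
    hsf.pass_gap_le_of_lt (y := fun k => x (s * t + k)) hL hconv hsmooth hmin
      (cyclic_step_shift hrec s) hΔ hD0 hdist⟩

/-- One-cycle descent recurrence (Theorem 3.1's recurrence \eqref{eq:straightforward-recurrence}):
with `δ_k := f (x k) - f xstar` and `H := Σ_{i<t}(h i - ε)`, each application of an
`ε`-straightforward pattern `h` satisfies the stated two-case decrease. -/
theorem straightforward_cycle_recurrence {n : ℕ} (t : ℕ) (ht : 1 ≤ t) (h : ℕ → ℝ)
    (ε Δ : ℝ) (hε : 0 ≤ ε) (hΔ : 0 < Δ) (hΔhalf : Δ ≤ 1 / 2)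
    (hsf : IsStraightforward t h ε Δ)
    (H : ℝ) (hH : H = ∑ i ∈ Finset.range t, (h i - ε))
    (L : ℝ) (hL : 0 < L)
    (f : E n → ℝ) (hconv : ConvexOn ℝ Set.univ f) (hsmooth : IsLSmooth L f)
    (xstar : E n) (hmin : ∀ z, f xstar ≤ f z)
    (x : ℕ → E n) (x0 : E n) (hx0 : x 0 = x0)
    (D : ℝ) (hD : IsLUB {r : ℝ | ∃ z : E n, f z ≤ f x0 ∧ r = ‖z - xstar‖} D)
    (hrec : ∀ k : ℕ, x (k + 1) = x k - (h (k % t) / L) • gradient f (x k)) :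
    ∀ s : ℕ,
      (f (x (s * t)) - f xstar ≤ L * D ^ 2 * Δ →
        f (x ((s + 1) * t)) - f xstar ≤
          (f (x (s * t)) - f xstar) - (H / (L * D ^ 2)) * (f (x (s * t)) - f xstar) ^ 2) ∧
      (L * D ^ 2 * Δ < f (x (s * t)) - f xstar →
        f (x ((s + 1) * t)) - f xstar ≤ (1 - H * Δ) * (f (x (s * t)) - f xstar)) :=
  straightforward_cycle_recurrence_general t h ε Δ hΔ hsf H hH L hL f hconv hsmooth xstar hmin x x0
    hx0 D hD hrec

end
end

section
/- Fix t ≥ 1, h ∈ ℝ^t, and L > 0, and use the PEP notation (with factor 1/L in the 𝐱 vectors). Suppose there exist real numbers λ_{i,j} ≥ 0 (for i ≠ j in I_t^⋆), v ≥ 0, and w ≥ 0 such that Σ_{i≠j} λ_{i,j}·a_{i,j} = a_{⋆,t} − w·a_{⋆,0} in ℝ^{t+1}, and the symmetric matrix Z := v·B_{0,⋆} + Σ_{i≠j} λ_{i,j}·(A_{i,j} + (1/(2L))·C_{i,j}) is positive semidefinite. Then for every n, every convex L-smooth f : ℝ^n → ℝ with a minimizer x_⋆, every x_0 ∈ ℝ^n,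 and the iterates x_{k+1} = x_k − (h_k/L)·∇f(x_k) for k = 0,…,t−1, one has f(x_t) − f(x_⋆) ≤ v·‖x_0 − x_⋆‖₂² + w·(f(x_0) − f(x_⋆)). -/
/-!
Weak duality. Along a run of gradient descent, send the PEP coordinates to the actual data:
`𝐱ᵢ ↦ xᵢ - x⋆`, `𝐠ᵢ ↦ ∇f(xᵢ)`, `𝐟ᵢ ↦ f(xᵢ) - f(x⋆)` (note `∇f(x⋆) = 0`). The pair
`(a_{i,j}, A_{i,j} + C_{i,j}/(2L))` then evaluates to the interpolation inequality of `L`-smooth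
convex functions,
`f(xⱼ) - f(xᵢ) + ⟪∇f(xⱼ), xᵢ - xⱼ⟫ + ‖∇f(xᵢ) - ∇f(xⱼ)‖² / (2L) ≤ 0`,
so the `λ`-weighted sum of these pairs evaluates to something `≤ 0`. By the linear constraint its
value part is `f(x_t) - f⋆ - w (f(x₀) - f⋆)`, and its matrix part is `⟨Z, G⟩ - v ‖x₀ - x⋆‖²`, where
`G` is the Gram matrix of `(x₀ - x⋆, ∇f(x₀), …, ∇f(x_t))` and `⟨Z, G⟩ ≥ 0` as both are PSD.
-/

open scoped BigOperators

noncomputable section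

/-- The PEP index set `I_t^⋆ = {⋆, 0, 1, …, t}`: `none` is `⋆`, `some i` is iterate `i`. -/
abbrev Idx (t : ℕ) : Type := Option (Fin (t + 1))

/-- Standard basis vector of `ℝ^{t+2}` (0-indexed position `k`). -/
def evec (t k : ℕ) : Fin (t + 2) → ℝ := fun j => if (j : ℕ) = k then 1 else 0

/-- `𝐠_⋆ = 0` and `𝐠_i = e_{i+2}` (1-indexed), i.e. 0-indexed position `i+1`. -/
def gvec (t : ℕ) : Idx t → Fin (t + 2) → ℝ
  | none => 0
  | some i => evec t ((i : ℕ) + 1)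

/-- `𝐱_⋆ = 0`, `𝐱_0 = e_1`, `𝐱_i = 𝐱_0 - (1/L) Σ_{j<i} h_j 𝐠_j`. -/
def xvec (t : ℕ) (h : ℕ → ℝ) (L : ℝ) : Idx t → Fin (t + 2) → ℝ
  | none => 0
  | some i => evec t 0 - L⁻¹ • ∑ j ∈ Finset.range (i : ℕ), h j • evec t (j + 1)

/-- `𝐟_⋆ = 0` and `𝐟_i = e_{i+1}` (1-indexed), i.e. 0-indexed position `i`. -/
def fvec (t : ℕ) : Idx t → Fin (t + 1) → ℝ
  | none => 0
  | some i => fun j => if j = i then 1 else 0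

/-- `a_{i,j} := 𝐟_j - 𝐟_i ∈ ℝ^{t+1}`. -/
def avec (t : ℕ) (i j : Idx t) : Fin (t + 1) → ℝ := fvec t j - fvec t i

/-- Symmetric outer product `x ⊙ y = (x yᵀ + y xᵀ)/2`. -/
def sop {m : ℕ} (x y : Fin m → ℝ) : Matrix (Fin m) (Fin m) ℝ :=
  Matrix.of fun a b => (x a * y b + y a * x b) / 2

/-- `A_{i,j} := 𝐠_j ⊙ (𝐱_i - 𝐱_j)`. -/
def Amat (t : ℕ) (h : ℕ → ℝ) (L : ℝ) (i j : Idx t) : Matrix (Fin (t + 2)) (Fin (t + 2)) ℝ :=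
  sop (gvec t j) (xvec t h L i - xvec t h L j)

/-- `B_{i,j} := (𝐱_i - 𝐱_j) ⊙ (𝐱_i - 𝐱_j)`. -/
def Bmat (t : ℕ) (h : ℕ → ℝ) (L : ℝ) (i j : Idx t) : Matrix (Fin (t + 2)) (Fin (t + 2)) ℝ :=
  sop (xvec t h L i - xvec t h L j) (xvec t h L i - xvec t h L j)

/-- `C_{i,j} := (𝐠_i - 𝐠_j) ⊙ (𝐠_i - 𝐠_j)`. -/
def Cmat (t : ℕ) (i j : Idx t) : Matrix (Fin (t + 2)) (Fin (t + 2)) ℝ :=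
  sop (gvec t i - gvec t j) (gvec t i - gvec t j)

open RealInnerProductSpace Finset

section SmoothConvex

variable {F : Type*} [NormedAddCommGroup F] [InnerProductSpace ℝ F] [CompleteSpace F]
  {f : F → ℝ} {L : ℝ}

open AffineMap

lemma hasDerivAt_comp_lineMap {a b : F} {s : ℝ} (hf : DifferentiableAt ℝ f (lineMap a b s)) :
    HasDerivAt (fun s : ℝ => f (lineMap a b s)) ⟪gradient f (lineMap a b s), b - a⟫ s := by
  rw [inner_gradient_left]
  exact hf.hasFDerivAt.comp_hasDerivAt s hasDerivAt_lineMap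

lemma ConvexOn.add_inner_gradient_le (hc : ConvexOn ℝ Set.univ f) {a : F}
    (hf : DifferentiableAt ℝ f a) (b : F) : f a + ⟪gradient f a, b - a⟫ ≤ f b := by
  have hline : ConvexOn ℝ Set.univ (fun s : ℝ => f (lineMap a b s)) :=
    hc.comp_affineMap (lineMap a b)
  have hderiv := hasDerivAt_comp_lineMap (a := a) (b := b) (s := 0) (by simpa using hf)
  have := hline.le_slope_of_hasDerivAt (Set.mem_univ 0) (Set.mem_univ 1) one_pos hderiv
  simp only [slope_def_field, lineMap_apply_zero, lineMap_apply_one, sub_zero, div_one] at this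
  linarith

lemma le_add_inner_gradient_add_sq (hf : Differentiable ℝ f)
    (hLip : ∀ x y, ‖gradient f x - gradient f y‖ ≤ L * ‖x - y‖) (a b : F) :
    f b ≤ f a + ⟪gradient f a, b - a⟫ + L / 2 * ‖b - a‖ ^ 2 := by
  set φ : ℝ → ℝ :=
    fun s => f (lineMap a b s) - s * ⟪gradient f a, b - a⟫ - L / 2 * s ^ 2 * ‖b - a‖ ^ 2
  have hφ' : ∀ s, HasDerivAt φ (⟪gradient f (lineMap a b s) - gradient f a, b - a⟫
      - L * s * ‖b - a‖ ^ 2) s := by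
    intro s
    refine (((hasDerivAt_comp_lineMap (a := a) (b := b) (hf _)).sub
      ((hasDerivAt_id s).mul_const ⟪gradient f a, b - a⟫)).sub
      (((hasDerivAt_pow 2 s).const_mul (L / 2)).mul_const (‖b - a‖ ^ 2))).congr_deriv ?_
    rw [inner_sub_left]
    ring
  have hanti : AntitoneOn φ (Set.Ici 0) := by
    refine antitoneOn_of_hasDerivWithinAt_nonpos (convex_Ici 0)
      (fun s _ => (hφ' s).continuousAt.continuousWithinAt) (fun s _ => (hφ' s).hasDerivWithinAt)
      fun s hs => sub_nonpos.mpr ?_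
    rw [interior_Ici, Set.mem_Ioi] at hs
    have hdist : ‖lineMap a b s - a‖ = s * ‖b - a‖ := by
      rw [← vsub_eq_sub, lineMap_vsub_left, vsub_eq_sub, norm_smul, Real.norm_of_nonneg hs.le]
    calc ⟪gradient f (lineMap a b s) - gradient f a, b - a⟫
        ≤ ‖gradient f (lineMap a b s) - gradient f a‖ * ‖b - a‖ := real_inner_le_norm _ _
      _ ≤ L * ‖lineMap a b s - a‖ * ‖b - a‖ := by gcongr; exact hLip _ _
      _ = L * s * ‖b - a‖ ^ 2 := by rw [hdist]; ring
  have := hanti Set.self_mem_Ici (Set.mem_Ici.mpr zero_le_one) zero_le_one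
  simp only [φ, lineMap_apply_zero, lineMap_apply_one] at this
  linarith

lemma ConvexOn.add_inner_gradient_add_sq_le (hc : ConvexOn ℝ Set.univ f) (hf : Differentiable ℝ f)
    (hL : 0 < L) (hLip : ∀ x y, ‖gradient f x - gradient f y‖ ≤ L * ‖x - y‖) (x y : F) :
    f y + ⟪gradient f y, x - y⟫ + (2 * L)⁻¹ * ‖gradient f x - gradient f y‖ ^ 2 ≤ f x := by
  set d := gradient f x - gradient f y
  -- compare the lower bound at `y` with the upper bound at `x` in the point `x - d / L`
  have hlow := hc.add_inner_gradient_le (hf y) (x - L⁻¹ • d)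
  have hup := le_add_inner_gradient_add_sq hf hLip x (x - L⁻¹ • d)
  rw [sub_right_comm, inner_sub_right, real_inner_smul_right] at hlow
  rw [sub_sub_cancel_left, inner_neg_right, real_inner_smul_right, norm_neg, norm_smul,
    Real.norm_of_nonneg (inv_nonneg.mpr hL.le)] at hup
  have hd : ⟪gradient f x, d⟫ - ⟪gradient f y, d⟫ = ‖d‖ ^ 2 := by
    rw [← inner_sub_left, real_inner_self_eq_norm_sq]
  have key : L / 2 * (L⁻¹ * ‖d‖) ^ 2 - L⁻¹ * (⟪gradient f x, d⟫ - ⟪gradient f y, d⟫)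
      = -((2 * L)⁻¹ * ‖d‖ ^ 2) := by
    rw [hd]; field_simp; ring
  linarith

end SmoothConvex

section GramPairing

variable {ι F : Type*} [Fintype ι] [NormedAddCommGroup F] [InnerProductSpace ℝ F]

def gramPairing (P : ι → F) : Matrix ι ι ℝ →ₗ[ℝ] ℝ where
  toFun M := ∑ a, ∑ b, M a b * ⟪P a, P b⟫
  map_add' M N := by simp only [Matrix.add_apply, add_mul, sum_add_distrib]
  map_smul' r M := by
    simp only [Matrix.smul_apply, smul_eq_mul, mul_assoc, mul_sum, RingHom.id_apply]

lemma gramPairing_apply (P : ι → F) (M : Matrix ι ι ℝ) :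
    gramPairing P M = ∑ a, ∑ b, M a b * ⟪P a, P b⟫ := rfl

lemma gramPairing_nonneg (P : ι → F) {M : Matrix ι ι ℝ} (hM : M.PosSemidef) :
    0 ≤ gramPairing P M := by
  classical
  -- the pairing is `1ᵀ (M ∘ G) 1` for the Gram matrix `G`, and `M ∘ G` is PSD by Schur's theorem
  have := (hM.hadamard (Matrix.posSemidef_gram ℝ P)).dotProduct_mulVec_nonneg 1
  simpa [gramPairing_apply, dotProduct, Matrix.mulVec, Matrix.gram_apply] using this

lemma gramPairing_sop {m : ℕ} (P : Fin m → F) (c d : Fin m → ℝ) :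
    gramPairing P (sop c d)
      = ⟪Fintype.linearCombination ℝ P c, Fintype.linearCombination ℝ P d⟫ := by
  simp only [gramPairing_apply, sop, Matrix.of_apply, Fintype.linearCombination_apply, sum_inner,
    inner_sum, real_inner_smul_left, real_inner_smul_right, add_div, add_mul, sum_add_distrib]
  rw [sum_comm, ← sum_add_distrib]
  refine sum_congr rfl fun a _ => ?_
  rw [← sum_add_distrib]
  refine sum_congr rfl fun b _ => ?_
  rw [real_inner_comm (P a)]
  ring

end GramPairing

lemma map_add_map_sum_offDiag_nonpos {ι V W : Type*} [Fintype ι] [DecidableEq ι]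
    [AddCommMonoid V] [Module ℝ V] [AddCommMonoid W] [Module ℝ W]
    (φ : V →ₗ[ℝ] ℝ) (Q : W →ₗ[ℝ] ℝ) {lam : ι → ι → ℝ} (hlam : ∀ i j, i ≠ j → 0 ≤ lam i j)
    {a : ι → ι → V} {M : ι → ι → W} (hpair : ∀ i j, i ≠ j → φ (a i j) + Q (M i j) ≤ 0) :
    φ (∑ i, ∑ j, if i = j then 0 else lam i j • a i j)
      + Q (∑ i, ∑ j, if i = j then 0 else lam i j • M i j) ≤ 0 := by
  simp only [map_sum, apply_ite φ, apply_ite Q, map_zero, map_smul, smul_eq_mul,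
    ← sum_add_distrib]
  refine sum_nonpos fun i _ => sum_nonpos fun j _ => ?_
  split_ifs with hij
  · simp
  · rw [← mul_add]
    exact mul_nonpos_of_nonneg_of_nonpos (hlam i j hij) (hpair i j hij)

lemma iterate_eq_sub_smul_sum {M : Type*} [AddCommGroup M] [Module ℝ M] {t : ℕ} {h : ℕ → ℝ}
    {L : ℝ} {g : M → M} {x : ℕ → M} (hx : ∀ k < t, x (k + 1) = x k - (h k / L) • g (x k)) :
    ∀ i ≤ t, x i = x 0 - L⁻¹ • ∑ j ∈ range i, h j • g (x j)
  | 0, _ => by simp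
  | i + 1, hi => by
    rw [hx i hi, sum_range_succ, smul_add, smul_smul, div_eq_inv_mul, ← sub_sub,
      ← iterate_eq_sub_smul_sum hx i (Nat.le_of_succ_le hi)]

lemma linearCombination_evec {M : Type*} [AddCommGroup M] [Module ℝ M] {t : ℕ}
    (P : Fin (t + 2) → M) (k : Fin (t + 2)) : Fintype.linearCombination ℝ P (evec t k) = P k := by
  classical
  have : evec t k = Pi.single k 1 := by
    ext j
    simp [evec, Pi.single_apply, Fin.val_eq_val]
  rw [this, Fintype.linearCombination_apply_single, one_smul]

section GradientDescentRun

variable {F : Type*} (t : ℕ) (f : F → ℝ) (xstar : F) (x : ℕ → F)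

def runPoint (i : Idx t) : F := i.elim xstar fun k => x k

def valueGaps : Fin (t + 1) → ℝ := fun k => f (x k) - f xstar

variable {t f xstar x}

lemma linearCombination_fvec (i : Idx t) :
    Fintype.linearCombination ℝ (valueGaps t f xstar x) (fvec t i)
      = f (runPoint t xstar x i) - f xstar := by
  cases i with
  | none => simp [fvec, runPoint]
  | some k => simp [fvec, runPoint, valueGaps, Fintype.linearCombination_apply]

variable [NormedAddCommGroup F] [InnerProductSpace ℝ F] [CompleteSpace F]

variable (t f xstar x) in
/-- Realises the PEP coordinates: `e_1 ↦ x₀ - x⋆` and `e_{i+2} ↦ ∇f(xᵢ)`. -/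
def gramFamily : Fin (t + 2) → F := Fin.cons (x 0 - xstar) fun k : Fin (t + 1) => gradient f (x k)

lemma linearCombination_gvec (hstar : gradient f xstar = 0) (i : Idx t) :
    Fintype.linearCombination ℝ (gramFamily t f xstar x) (gvec t i)
      = gradient f (runPoint t xstar x i) := by
  cases i with
  | none => simp [gvec, runPoint, hstar]
  | some k =>
    rw [gvec, ← Fin.val_succ, linearCombination_evec]
    simp [gramFamily, runPoint]

lemma linearCombination_xvec {h : ℕ → ℝ} {L : ℝ}
    (hx : ∀ k < t, x (k + 1) = x k - (h k / L) • gradient f (x k)) (i : Idx t) :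
    Fintype.linearCombination ℝ (gramFamily t f xstar x) (xvec t h L i)
      = runPoint t xstar x i - xstar := by
  cases i with
  | none => simp [xvec, runPoint]
  | some k =>
    have hstep : ∀ j ∈ range k, Fintype.linearCombination ℝ (gramFamily t f xstar x)
        (h j • evec t (j + 1)) = h j • gradient f (x j) := by
      intro j hj
      have hjt : j < t + 1 := (mem_range.mp hj).trans k.isLt
      rw [map_smul, show j + 1 = ((⟨j, hjt⟩ : Fin (t + 1)).succ : ℕ) from rfl,
        linearCombination_evec, gramFamily, Fin.cons_succ]
    rw [xvec, map_sub, map_smul, map_sum, sum_congr rfl hstep,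
      show (0 : ℕ) = ((0 : Fin (t + 2)) : ℕ) from rfl, linearCombination_evec, runPoint,
      Option.elim_some, iterate_eq_sub_smul_sum hx k (Nat.lt_succ_iff.mp k.isLt)]
    simp only [gramFamily, Fin.cons_zero]
    abel

end GradientDescentRun

theorem dual_PEP_soundness_general (t : ℕ) (h : ℕ → ℝ) (L : ℝ) (hL : 0 < L)
    (lam : Idx t → Idx t → ℝ) (v w : ℝ)
    (hlam : ∀ i j : Idx t, i ≠ j → 0 ≤ lam i j)
    (heq : (∑ i : Idx t, ∑ j : Idx t, if i = j then 0 else lam i j • avec t i j)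
      = avec t none (some (Fin.last t)) - w • avec t none (some 0))
    (hZ : (v • Bmat t h L (some 0) none
        + ∑ i : Idx t, ∑ j : Idx t,
            if i = j then 0 else lam i j • (Amat t h L i j + (2 * L)⁻¹ • Cmat t i j)).PosSemidef) :
    ∀ (n : ℕ) (f : E n → ℝ), ConvexOn ℝ Set.univ f → IsLSmooth L f →
      ∀ xstar : E n, (∀ z, f xstar ≤ f z) →
        ∀ x : ℕ → E n,
          (∀ k < t, x (k + 1) = x k - (h k / L) • gradient f (x k)) →
          f (x t) - f xstar ≤ v * ‖x 0 - xstar‖ ^ 2 + w * (f (x 0) - f xstar) := by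
  intro n f hc ⟨hf, hLip⟩ xstar hmin x hx
  have hstar : gradient f xstar = 0 := by
    rw [gradient, IsLocalMin.fderiv_eq_zero (.of_forall hmin), map_zero]
  have hpair : ∀ i j : Idx t, i ≠ j →
      Fintype.linearCombination ℝ (valueGaps t f xstar x) (avec t i j)
        + gramPairing (gramFamily t f xstar x) (Amat t h L i j + (2 * L)⁻¹ • Cmat t i j) ≤ 0 := by
    intro i j _
    have := hc.add_inner_gradient_add_sq_le hf hL hLip (runPoint t xstar x i) (runPoint t xstar x j)
    simp only [avec, Amat, Cmat, map_add, map_sub, map_smul, gramPairing_sop,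
      linearCombination_fvec, linearCombination_gvec hstar, linearCombination_xvec hx,
      real_inner_self_eq_norm_sq, sub_sub_sub_cancel_right, smul_eq_mul]
    linarith
  have hdual := map_add_map_sum_offDiag_nonpos _ _ hlam hpair
  have hZ' := gramPairing_nonneg (gramFamily t f xstar x) hZ
  rw [heq] at hdual
  simp only [avec, Bmat, map_add, map_sub, map_smul, gramPairing_sop, linearCombination_fvec,
    linearCombination_xvec hx, real_inner_self_eq_norm_sq, smul_eq_mul, runPoint, Option.elim,
    Fin.val_last, Fin.val_zero, sub_self, sub_zero] at hdual hZ'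
  linarith

/-- Soundness of a feasible point of the dual performance-estimation SDP:
nonnegative multipliers `lam, v, w` satisfying the linear equality on the `a_{i,j}`
and the PSD condition on `Z` certify the worst-case bound
`f (x t) - f xstar ≤ v ‖x 0 - xstar‖² + w (f (x 0) - f xstar)`
for all convex `L`-smooth `f` and the gradient descent iterates with stepsizes `h_k/L`. -/
theorem dual_PEP_soundness (t : ℕ) (ht : 1 ≤ t) (h : ℕ → ℝ) (L : ℝ) (hL : 0 < L)
    (lam : Idx t → Idx t → ℝ) (v w : ℝ)
    (hlam : ∀ i j : Idx t, i ≠ j → 0 ≤ lam i j) (hv : 0 ≤ v) (hw : 0 ≤ w)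
    (heq : (∑ i : Idx t, ∑ j : Idx t, if i = j then 0 else lam i j • avec t i j)
      = avec t none (some (Fin.last t)) - w • avec t none (some 0))
    (hZ : (v • Bmat t h L (some 0) none
        + ∑ i : Idx t, ∑ j : Idx t,
            if i = j then 0 else lam i j • (Amat t h L i j + (2 * L)⁻¹ • Cmat t i j)).PosSemidef) :
    ∀ (n : ℕ) (f : E n → ℝ), ConvexOn ℝ Set.univ f → IsLSmooth L f →
      ∀ xstar : E n, (∀ z, f xstar ≤ f z) →
        ∀ x : ℕ → E n,
          (∀ k < t, x (k + 1) = x k - (h k / L) • gradient f (x k)) →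
          f (x t) - f xstar ≤ v * ‖x 0 - xstar‖ ^ 2 + w * (f (x 0) - f xstar) :=
  dual_PEP_soundness_general t h L hL lam v w hlam heq hZ

end
end

section
/- Fix t ≥ 1, h ∈ ℝ^t, ε ≥ 0, and Δ ∈ (0,1/2], and use the normalized (L = 1) PEP notation with block maps m_h and M_h. Suppose (λ,γ) satisfies: Σ_{i≠j} λ_{i,j}·a_{i,j} = a_{⋆,t} − a_{⋆,0}; Σ_{i≠j} γ_{i,j}·a_{i,j} = 2(Σ_{i=0}^{t−1} h_i)·a_{⋆,0}; m_h(λ) = 0; λ_{i,j} ≥ 0 and λ_{i,j} + Δ·γ_{i,j} ≥ 0 for all i ≠ j; and the two matrices [[ Σ_{i=0}^{t−1}(h_i+ε), m_h(γ)ᵀ ], [ m_h(γ), M_h(λ) ]] and [[ Σ_{i=0}^{t−1}(h_i+ε), m_h(γ)ᵀ ], [ m_h(γ), M_h(λ+Δγ) ]] are positive semidefinite. Then for every δ ∈ [0,Δ], the multiplier array λ + δ·γ satisfies: (λ+δγ)_{i,j} ≥ 0 for all i ≠ j; Σ_{i≠j}(λ+δγ)_{i,j}·a_{i,j} = a_{⋆,t}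 − (1 − 2(Σ_{i=0}^{t−1} h_i)·δ)·a_{⋆,0}; and Z_{h,ε}(λ+δγ, δ) ⪰ 0. -/
open scoped BigOperators

noncomputable section

/-- The `λ`-linear part `Σ_{i≠j} λ_{i,j} (A_{i,j} + ½ C_{i,j})` of `Z_{h,ε}(λ,δ)`
in the normalized (`L = 1`) PEP notation. -/
def Zlin (t : ℕ) (h : ℕ → ℝ) (lam : Idx t → Idx t → ℝ) :
    Matrix (Fin (t + 2)) (Fin (t + 2)) ℝ :=
  ∑ i : Idx t, ∑ j : Idx t,
    if i = j then 0 else lam i j • (Amat t h 1 i j + (2 : ℝ)⁻¹ • Cmat t i j)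

/-- `Z_{h,ε}(λ,δ)` in the normalized (`L = 1`) PEP notation. -/
def Zfun (t : ℕ) (h : ℕ → ℝ) (ε : ℝ) (lam : Idx t → Idx t → ℝ) (δ : ℝ) :
    Matrix (Fin (t + 2)) (Fin (t + 2)) ℝ :=
  ((∑ i ∈ Finset.range t, (h i + ε)) * δ ^ 2) • Bmat t h 1 (some 0) none + Zlin t h lam

/-- The off-diagonal block `m_h(λ) ∈ ℝ^{t+1}` (first row of `Z` minus its corner). -/
def mvec (t : ℕ) (h : ℕ → ℝ) (lam : Idx t → Idx t → ℝ) : Fin (t + 1) → ℝ :=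
  fun j => Zlin t h lam 0 j.succ

/-- The lower-right block `M_h(λ) ∈ ℝ^{(t+1)×(t+1)}` of `Z`. -/
def Mmat (t : ℕ) (h : ℕ → ℝ) (lam : Idx t → Idx t → ℝ) :
    Matrix (Fin (t + 1)) (Fin (t + 1)) ℝ :=
  Matrix.of fun a b => Zlin t h lam a.succ b.succ

/-- The `(t+2)×(t+2)` block matrix `[[c, mᵀ], [m, M]]`. -/
def blockMat (t : ℕ) (c : ℝ) (m : Fin (t + 1) → ℝ) (M : Matrix (Fin (t + 1)) (Fin (t + 1)) ℝ) :
    Matrix (Fin (t + 2)) (Fin (t + 2)) ℝ :=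
  Matrix.of fun a b =>
    Fin.cases (Fin.cases c (fun j => m j) b) (fun i => Fin.cases (m i) (fun j => M i j) b) a

/-!
Because `m_h(λ) = 0` and the corner entry of `Σ λ_{i,j} (A_{i,j} + ½ C_{i,j})` vanishes,
`Z_{h,ε}(λ + δγ, δ)` is the block matrix `[[c δ², δ m_h(γ)ᵀ], [δ m_h(γ), M_h(λ) + δ M_h(γ)]]`
with `c = Σ_{i<t} (h_i + ε)`, i.e. the congruence by `diag(δ, 1, …, 1)` of
`[[c, m_h(γ)ᵀ], [m_h(γ), M_h(λ) + δ M_h(γ)]]`. This matrix is affine in `δ` and positive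
semidefinite at `δ = 0` and `δ = Δ`, hence on all of `[0, Δ]` by convexity of the PSD cone; the
same convexity argument in `ℝ` gives the sign conditions.
-/

open Matrix

theorem Convex.add_smul_mem_of_le {V : Type*} [AddCommGroup V] [Module ℝ V] {s : Set V}
    (hs : Convex ℝ s) {x y : V} {δ Δ : ℝ} (hx : x ∈ s) (hy : x + Δ • y ∈ s) (hδ : 0 ≤ δ)
    (hδΔ : δ ≤ Δ) : x + δ • y ∈ s := by
  have hΔ : 0 ≤ Δ := hδ.trans hδΔ
  have hθ : δ / Δ * Δ = δ := div_mul_cancel_of_imp fun h0 => le_antisymm (h0 ▸ hδΔ) hδ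
  have := hs.add_smul_mem hx hy ⟨div_nonneg hδ hΔ, div_le_one_of_le₀ hδΔ hΔ⟩
  rwa [smul_smul, hθ] at this

open scoped ComplexOrder in
theorem Matrix.convex_setOf_posSemidef {n 𝕜 : Type*} [Fintype n] [RCLike 𝕜] :
    Convex ℝ {A : Matrix n n 𝕜 | A.PosSemidef} :=
  fun _ hA _ hB _ _ ha hb _ => (hA.smul ha).add (hB.smul hb)

open scoped ComplexOrder in
theorem Matrix.PosSemidef.add_smul_of_le {n 𝕜 : Type*} [Fintype n] [RCLike 𝕜]
    {A B : Matrix n n 𝕜} {δ Δ : ℝ} (hA : A.PosSemidef) (hAB : (A + Δ • B).PosSemidef)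
    (hδ : 0 ≤ δ) (hδΔ : δ ≤ Δ) : (A + δ • B).PosSemidef :=
  convex_setOf_posSemidef.add_smul_mem_of_le (s := {A : Matrix n n 𝕜 | A.PosSemidef})
    hA hAB hδ hδΔ

theorem Finset.sum_sum_ite_add_mul_smul {ι R V : Type*} [Fintype ι] [DecidableEq ι]
    [Semiring R] [AddCommMonoid V] [Module R V] (w w' : ι → ι → R) (c : R) (v : ι → ι → V) :
    (∑ i, ∑ j, if i = j then 0 else (w i j + c * w' i j) • v i j) =
      (∑ i, ∑ j, if i = j then 0 else w i j • v i j) +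
        c • ∑ i, ∑ j, if i = j then 0 else w' i j • v i j := by
  simp only [Finset.smul_sum, ← Finset.sum_add_distrib]
  refine Finset.sum_congr rfl fun i _ => Finset.sum_congr rfl fun j _ => ?_
  split_ifs <;> simp [add_smul, mul_smul]

variable {t : ℕ} {h : ℕ → ℝ}

theorem Zlin_add_smul (lam gam : Idx t → Idx t → ℝ) (c : ℝ) :
    Zlin t h (fun i j => lam i j + c * gam i j) = Zlin t h lam + c • Zlin t h gam :=
  Finset.sum_sum_ite_add_mul_smul lam gam c _

theorem mvec_add_smul (lam gam : Idx t → Idx t → ℝ) (c : ℝ) :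
    mvec t h (fun i j => lam i j + c * gam i j) = mvec t h lam + c • mvec t h gam := by
  ext j
  simp [mvec, Zlin_add_smul]

theorem Mmat_add_smul (lam gam : Idx t → Idx t → ℝ) (c : ℝ) :
    Mmat t h (fun i j => lam i j + c * gam i j) = Mmat t h lam + c • Mmat t h gam := by
  ext a b
  simp [Mmat, Zlin_add_smul]

theorem gvec_apply_zero (k : Idx t) : gvec t k 0 = 0 := by
  cases k <;> simp [gvec, evec]

theorem Zlin_apply_comm (lam : Idx t → Idx t → ℝ) (a b : Fin (t + 2)) :
    Zlin t h lam a b = Zlin t h lam b a := by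
  simp only [Zlin, Matrix.sum_apply]
  refine Finset.sum_congr rfl fun i _ => Finset.sum_congr rfl fun j _ => ?_
  split_ifs
  · rfl
  · simp only [Matrix.smul_apply, Matrix.add_apply, Amat, Cmat, sop, Matrix.of_apply,
      Pi.sub_apply, smul_eq_mul]
    ring

theorem Zlin_apply_zero_zero (lam : Idx t → Idx t → ℝ) : Zlin t h lam 0 0 = 0 := by
  simp only [Zlin, Matrix.sum_apply]
  refine Finset.sum_eq_zero fun i _ => Finset.sum_eq_zero fun j _ => ?_
  split_ifs <;> simp [Amat, Cmat, sop, gvec_apply_zero]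

theorem Bmat_some_zero_none : Bmat t h 1 (some 0) none = sop (evec t 0) (evec t 0) := by
  simp [Bmat, xvec]

theorem Zfun_eq_blockMat (ε : ℝ) (lam : Idx t → Idx t → ℝ) (δ : ℝ) :
    Zfun t h ε lam δ =
      blockMat t ((∑ i ∈ Finset.range t, (h i + ε)) * δ ^ 2) (mvec t h lam) (Mmat t h lam) := by
  ext a b
  induction a using Fin.cases <;> induction b using Fin.cases <;>
    simp [Zfun, Bmat_some_zero_none, sop, evec, blockMat, mvec, Mmat, Zlin_apply_zero_zero,
      Zlin_apply_comm _ _ 0, Fin.succ_ne_zero]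

theorem diagonal_mul_blockMat_mul_diagonal (s c : ℝ) (m : Fin (t + 1) → ℝ)
    (M : Matrix (Fin (t + 1)) (Fin (t + 1)) ℝ) :
    diagonal (Fin.cons s 1) * blockMat t c m M * diagonal (Fin.cons s 1) =
      blockMat t (s * c * s) (s • m) M := by
  ext a b
  induction a using Fin.cases <;> induction b using Fin.cases <;>
    simp [blockMat, mul_comm]

theorem blockMat_add_smul (c : ℝ) (m : Fin (t + 1) → ℝ)
    (M N : Matrix (Fin (t + 1)) (Fin (t + 1)) ℝ) (s : ℝ) :
    blockMat t c m (M + s • N) = blockMat t c m M + s • blockMat t 0 0 N := by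
  ext a b
  induction a using Fin.cases <;> induction b using Fin.cases <;> simp [blockMat]

theorem certificate_gives_dual_family_general (t : ℕ) (h : ℕ → ℝ)
    (ε : ℝ) (Δ : ℝ)
    (lam gam : Idx t → Idx t → ℝ)
    (heq1 : (∑ i : Idx t, ∑ j : Idx t, if i = j then 0 else lam i j • avec t i j)
      = avec t none (some (Fin.last t)) - avec t none (some 0))
    (heq2 : (∑ i : Idx t, ∑ j : Idx t, if i = j then 0 else gam i j • avec t i j)
      = (2 * ∑ i ∈ Finset.range t, h i) • avec t none (some 0))
    (hm : mvec t h lam = 0)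
    (hlam : ∀ i j : Idx t, i ≠ j → 0 ≤ lam i j)
    (hlamgam : ∀ i j : Idx t, i ≠ j → 0 ≤ lam i j + Δ * gam i j)
    (hZ1 : (blockMat t (∑ i ∈ Finset.range t, (h i + ε)) (mvec t h gam)
      (Mmat t h lam)).PosSemidef)
    (hZ2 : (blockMat t (∑ i ∈ Finset.range t, (h i + ε)) (mvec t h gam)
      (Mmat t h (fun i j => lam i j + Δ * gam i j))).PosSemidef) :
    ∀ δ : ℝ, 0 ≤ δ → δ ≤ Δ →
      (∀ i j : Idx t, i ≠ j → 0 ≤ lam i j + δ * gam i j) ∧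
      ((∑ i : Idx t, ∑ j : Idx t,
          if i = j then 0 else (lam i j + δ * gam i j) • avec t i j)
        = avec t none (some (Fin.last t))
          - (1 - 2 * (∑ i ∈ Finset.range t, h i) * δ) • avec t none (some 0)) ∧
      (Zfun t h ε (fun i j => lam i j + δ * gam i j) δ).PosSemidef := by
  intro δ hδ hδΔ
  refine ⟨fun i j hij => ?_, ?_, ?_⟩
  · simpa using
      (convex_Ici (0 : ℝ)).add_smul_mem_of_le (hlam i j hij) (hlamgam i j hij) hδ hδΔ
  · rw [Finset.sum_sum_ite_add_mul_smul, heq1, heq2]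
    ext k
    simp only [Pi.add_apply, Pi.sub_apply, Pi.smul_apply, smul_eq_mul]
    ring
  · set c := ∑ i ∈ Finset.range t, (h i + ε)
    have hsegment :
        (blockMat t c (mvec t h gam) (Mmat t h lam + δ • Mmat t h gam)).PosSemidef := by
      rw [blockMat_add_smul]
      exact hZ1.add_smul_of_le (by rwa [← blockMat_add_smul, ← Mmat_add_smul]) hδ hδΔ
    have hcongr := hsegment.mul_mul_conjTranspose_same (diagonal (Fin.cons δ 1))
    rw [diagonal_conjTranspose, star_trivial, diagonal_mul_blockMat_mul_diagonal] at hcongr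
    rw [Zfun_eq_blockMat, mvec_add_smul, hm, zero_add, Mmat_add_smul]
    convert hcongr using 2
    ring

/-- Finite-dimensional core of the certificate theorem: a feasible pair `(λ, γ)` in
`S_{h,ε,Δ}` yields, via the affine family `λ + δ γ`, a member of `R_{h,ε,δ}` for every
`δ ∈ [0, Δ]`: nonnegativity, the linear equality, and `Z_{h,ε}(λ+δγ, δ) ⪰ 0`. -/
theorem certificate_gives_dual_family (t : ℕ) (ht : 1 ≤ t) (h : ℕ → ℝ)
    (ε : ℝ) (hε : 0 ≤ ε) (Δ : ℝ) (hΔ : 0 < Δ) (hΔhalf : Δ ≤ 1 / 2)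
    (lam gam : Idx t → Idx t → ℝ)
    (heq1 : (∑ i : Idx t, ∑ j : Idx t, if i = j then 0 else lam i j • avec t i j)
      = avec t none (some (Fin.last t)) - avec t none (some 0))
    (heq2 : (∑ i : Idx t, ∑ j : Idx t, if i = j then 0 else gam i j • avec t i j)
      = (2 * ∑ i ∈ Finset.range t, h i) • avec t none (some 0))
    (hm : mvec t h lam = 0)
    (hlam : ∀ i j : Idx t, i ≠ j → 0 ≤ lam i j)
    (hlamgam : ∀ i j : Idx t, i ≠ j → 0 ≤ lam i j + Δ * gam i j)
    (hZ1 : (blockMat t (∑ i ∈ Finset.range t, (h i + ε)) (mvec t h gam)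
      (Mmat t h lam)).PosSemidef)
    (hZ2 : (blockMat t (∑ i ∈ Finset.range t, (h i + ε)) (mvec t h gam)
      (Mmat t h (fun i j => lam i j + Δ * gam i j))).PosSemidef) :
    ∀ δ : ℝ, 0 ≤ δ → δ ≤ Δ →
      (∀ i j : Idx t, i ≠ j → 0 ≤ lam i j + δ * gam i j) ∧
      ((∑ i : Idx t, ∑ j : Idx t,
          if i = j then 0 else (lam i j + δ * gam i j) • avec t i j)
        = avec t none (some (Fin.last t))
          - (1 - 2 * (∑ i ∈ Finset.range t, h i) * δ) • avec t none (some 0)) ∧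
      (Zfun t h ε (fun i j => lam i j + δ * gam i j) δ).PosSemidef :=
  certificate_gives_dual_family_general t h ε Δ lam gam heq1 heq2 hm hlam hlamgam hZ1 hZ2

end
end
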